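/- For an AKN system H_j = Σ_k (S̃_{jk}/det S) f_k(q^k, p_k) built from a Stäckel matrix S(q) (with S̃_{jk} the cofactor of S_{kj}) and the diagonal operators K_j = Σ_r (S̃_{jr}/S̃_{1r})(∂/∂q^r ⊗ dq^r + ∂/∂p_r ⊗ dp_r), in the 2-dimensional case n = 2 the Haantjes chain relation K_jᵀ dH₁ = dH_j holds, i.e., for each j ∈ {1,2} and each r, (S̃_{jr}/S̃_{1r}) ∂H₁/∂q^r = ∂H_j/∂q^r and (S̃_{jr}/S̃_{1r}) ∂H₁/∂p_r = ∂H_j/∂p_r. -/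

import Mathlib

noncomputable section

/-- Partial derivative on phase space ℝ⁴ with coordinates (q¹,q²,p₁,p₂). -/
def pd (F : (Fin 4 → ℝ) → ℝ) (i : Fin 4) (v : Fin 4 → ℝ) : ℝ :=
  fderiv ℝ F v (Pi.single i 1)

theorem fin4_mk0 (h : 0 < 4) : (⟨0, h⟩ : Fin 4) = 0 := rfl
theorem fin4_mk1 (h : 1 < 4) : (⟨1, h⟩ : Fin 4) = 1 := rfl
theorem fin4_mk2 (h : 2 < 4) : (⟨2, h⟩ : Fin 4) = 2 := rfl
theorem fin4_mk3 (h : 3 < 4) : (⟨3, h⟩ : Fin 4) = 3 := rfl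

open ContinuousLinearMap in
theorem pd_phi (α β A B C D : ℝ → ℝ) (f0 f1 : ℝ → ℝ → ℝ) (v : Fin 4 → ℝ)
    (al' be' a' b' c' d' : ℝ) (Df0 Df1 : ℝ × ℝ →L[ℝ] ℝ)
    (hal : HasDerivAt α al' (v 1)) (hbe : HasDerivAt β be' (v 0))
    (ha : HasDerivAt A a' (v 0)) (hb : HasDerivAt B b' (v 0))
    (hc : HasDerivAt C c' (v 1)) (hd : HasDerivAt D d' (v 1))
    (hF0 : HasFDerivAt (fun p : ℝ × ℝ => f0 p.1 p.2) Df0 (v 0, v 2))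
    (hF1 : HasFDerivAt (fun p : ℝ × ℝ => f1 p.1 p.2) Df1 (v 1, v 3))
    (hdet : A (v 0) * D (v 1) - B (v 0) * C (v 1) ≠ 0) :
    (pd (fun w : Fin 4 → ℝ => (α (w 1) * f0 (w 0) (w 2) + β (w 0) * f1 (w 1) (w 3)) /
      (A (w 0) * D (w 1) - B (w 0) * C (w 1))) 0 v =
      ((α (v 1) * Df0 (1, 0) + be' * f1 (v 1) (v 3)) * (A (v 0) * D (v 1) - B (v 0) * C (v 1))
        - (α (v 1) * f0 (v 0) (v 2) + β (v 0) * f1 (v 1) (v 3)) * (a' * D (v 1) - b' * C (v 1)))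
        / (A (v 0) * D (v 1) - B (v 0) * C (v 1)) ^ 2) ∧
    (pd (fun w : Fin 4 → ℝ => (α (w 1) * f0 (w 0) (w 2) + β (w 0) * f1 (w 1) (w 3)) /
      (A (w 0) * D (w 1) - B (w 0) * C (w 1))) 1 v =
      ((al' * f0 (v 0) (v 2) + β (v 0) * Df1 (1, 0)) * (A (v 0) * D (v 1) - B (v 0) * C (v 1))
        - (α (v 1) * f0 (v 0) (v 2) + β (v 0) * f1 (v 1) (v 3)) * (A (v 0) * d' - B (v 0) * c'))
        / (A (v 0) * D (v 1) - B (v 0) * C (v 1)) ^ 2) ∧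
    (pd (fun w : Fin 4 → ℝ => (α (w 1) * f0 (w 0) (w 2) + β (w 0) * f1 (w 1) (w 3)) /
      (A (w 0) * D (w 1) - B (w 0) * C (w 1))) 2 v =
      α (v 1) * Df0 (0, 1) / (A (v 0) * D (v 1) - B (v 0) * C (v 1))) ∧
    (pd (fun w : Fin 4 → ℝ => (α (w 1) * f0 (w 0) (w 2) + β (w 0) * f1 (w 1) (w 3)) /
      (A (w 0) * D (w 1) - B (w 0) * C (w 1))) 3 v =
      β (v 0) * Df1 (0, 1) / (A (v 0) * D (v 1) - B (v 0) * C (v 1))) := by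
  have p0 : HasFDerivAt (fun w : Fin 4 → ℝ => w 0) (proj (0 : Fin 4) : (Fin 4 → ℝ) →L[ℝ] ℝ) v :=
    ContinuousLinearMap.hasFDerivAt (proj (0 : Fin 4) : (Fin 4 → ℝ) →L[ℝ] ℝ)
  have p1 : HasFDerivAt (fun w : Fin 4 → ℝ => w 1) (proj (1 : Fin 4) : (Fin 4 → ℝ) →L[ℝ] ℝ) v :=
    ContinuousLinearMap.hasFDerivAt (proj (1 : Fin 4) : (Fin 4 → ℝ) →L[ℝ] ℝ)
  have p2 : HasFDerivAt (fun w : Fin 4 → ℝ => w 2) (proj (2 : Fin 4) : (Fin 4 → ℝ) →L[ℝ] ℝ) v :=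
    ContinuousLinearMap.hasFDerivAt (proj (2 : Fin 4) : (Fin 4 → ℝ) →L[ℝ] ℝ)
  have p3 : HasFDerivAt (fun w : Fin 4 → ℝ => w 3) (proj (3 : Fin 4) : (Fin 4 → ℝ) →L[ℝ] ℝ) v :=
    ContinuousLinearMap.hasFDerivAt (proj (3 : Fin 4) : (Fin 4 → ℝ) →L[ℝ] ℝ)
  have hF0c : HasFDerivAt (fun w : Fin 4 → ℝ => f0 (w 0) (w 2)) (Df0.comp ((proj 0).prod (proj 2))) v :=
    HasFDerivAt.comp (g := fun p : ℝ × ℝ => f0 p.1 p.2) v hF0 (p0.prodMk p2)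
  have hF1c : HasFDerivAt (fun w : Fin 4 → ℝ => f1 (w 1) (w 3)) (Df1.comp ((proj 1).prod (proj 3))) v :=
    HasFDerivAt.comp (g := fun p : ℝ × ℝ => f1 p.1 p.2) v hF1 (p1.prodMk p3)
  have halc : HasFDerivAt (fun w : Fin 4 → ℝ => α (w 1)) (al' • (proj (1 : Fin 4) : (Fin 4 → ℝ) →L[ℝ] ℝ)) v :=
    hal.comp_hasFDerivAt v p1
  have hbec : HasFDerivAt (fun w : Fin 4 → ℝ => β (w 0)) (be' • (proj (0 : Fin 4) : (Fin 4 → ℝ) →L[ℝ] ℝ)) v :=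
    hbe.comp_hasFDerivAt v p0
  have hac : HasFDerivAt (fun w : Fin 4 → ℝ => A (w 0)) (a' • (proj (0 : Fin 4) : (Fin 4 → ℝ) →L[ℝ] ℝ)) v :=
    ha.comp_hasFDerivAt v p0
  have hbc : HasFDerivAt (fun w : Fin 4 → ℝ => B (w 0)) (b' • (proj (0 : Fin 4) : (Fin 4 → ℝ) →L[ℝ] ℝ)) v :=
    hb.comp_hasFDerivAt v p0
  have hcc : HasFDerivAt (fun w : Fin 4 → ℝ => C (w 1)) (c' • (proj (1 : Fin 4) : (Fin 4 → ℝ) →L[ℝ] ℝ)) v :=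
    hc.comp_hasFDerivAt v p1
  have hdc : HasFDerivAt (fun w : Fin 4 → ℝ => D (w 1)) (d' • (proj (1 : Fin 4) : (Fin 4 → ℝ) →L[ℝ] ℝ)) v :=
    hd.comp_hasFDerivAt v p1
  have hnum := (halc.mul hF0c).add (hbec.mul hF1c)
  have hden := (hac.mul hdc).sub (hbc.mul hcc)
  have hinv := HasDerivAt.comp_hasFDerivAt (𝕜 := ℝ) v (hasDerivAt_inv hdet) hden
  have hPhi := hnum.mul hinv
  simp only [Function.comp_def, Pi.mul_def, Pi.add_def, Pi.sub_def] at hPhi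
  have hfun : (fun w : Fin 4 → ℝ => (α (w 1) * f0 (w 0) (w 2) + β (w 0) * f1 (w 1) (w 3)) /
      (A (w 0) * D (w 1) - B (w 0) * C (w 1)))
      = fun w : Fin 4 → ℝ => (α (w 1) * f0 (w 0) (w 2) + β (w 0) * f1 (w 1) (w 3)) *
      (A (w 0) * D (w 1) - B (w 0) * C (w 1))⁻¹ := by
    funext w; rw [div_eq_mul_inv]
  refine ⟨?_, ?_, ?_, ?_⟩ <;>
  · rw [pd, hfun, hPhi.fderiv]
    simp [Pi.single_apply, Prod.mk_zero_zero]
    try field_simp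
    try ring

/-- AKN/Stäckel system with n = 2: the Stäckel matrix S(q) has rows
S i k = s i k (q^i) (the i-th row depends only on q^i); the cofactor matrix
S̃ (with S̃_{jk} the cofactor of S_{kj}) is the adjugate of S; the Hamiltonians are
H_j = Σ_k (S̃_{jk}/det S) f_k(q^k,p_k).  Then the diagonal Haantjes operators
K_j = Σ_r (S̃_{jr}/S̃_{1r})(∂/∂q^r ⊗ dq^r + ∂/∂p_r ⊗ dp_r) satisfy the chain relation
K_jᵀ dH₁ = dH_j, componentwise in each coordinate and momentum direction. -/
theorem akn_haantjes_chain_n2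
    (s : Fin 2 → Fin 2 → ℝ → ℝ) (hs : ∀ i k, ContDiff ℝ (⊤ : ℕ∞) (s i k))
    (f : Fin 2 → ℝ → ℝ → ℝ) (hf : ∀ k, ContDiff ℝ (⊤ : ℕ∞) (fun x : ℝ × ℝ => f k x.1 x.2))
    (Sm : (Fin 4 → ℝ) → Matrix (Fin 2) (Fin 2) ℝ)
    (hSm : Sm = fun v => Matrix.of fun i k : Fin 2 => s i k (v ⟨i.1, by omega⟩))
    (hdet : ∀ v, (Sm v).det ≠ 0)
    (hcof : ∀ v, ∀ r : Fin 2, (Sm v).adjugate 0 r ≠ 0)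
    (H : Fin 2 → (Fin 4 → ℝ) → ℝ)
    (hH : H = fun j v => ∑ k : Fin 2,
      ((Sm v).adjugate j k / (Sm v).det) * f k (v ⟨k.1, by omega⟩) (v ⟨k.1 + 2, by omega⟩)) :
    ∀ j : Fin 2, ∀ r : Fin 2, ∀ v : Fin 4 → ℝ,
      ((Sm v).adjugate j r / (Sm v).adjugate 0 r) * pd (H 0) ⟨r.1, by omega⟩ v
        = pd (H j) ⟨r.1, by omega⟩ v ∧
      ((Sm v).adjugate j r / (Sm v).adjugate 0 r) * pd (H 0) ⟨r.1 + 2, by omega⟩ v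
        = pd (H j) ⟨r.1 + 2, by omega⟩ v := by
  intro j r v
  have hdet' : s 0 0 (v 0) * s 1 1 (v 1) - s 0 1 (v 0) * s 1 0 (v 1) ≠ 0 := by
    have h := hdet v
    rw [hSm] at h
    simpa [Matrix.det_fin_two, fin4_mk0, fin4_mk1] using h
  have hc0 : s 1 1 (v 1) ≠ 0 := by
    have h := hcof v 0
    rw [hSm] at h
    simpa [Matrix.adjugate_fin_two, fin4_mk0, fin4_mk1] using h
  have hc1 : s 0 1 (v 0) ≠ 0 := by
    have h := hcof v 1
    rw [hSm] at h
    simpa [Matrix.adjugate_fin_two, fin4_mk0, fin4_mk1, neg_ne_zero] using h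
  have hds : ∀ (i k : Fin 2) (x : ℝ), HasDerivAt (s i k) (deriv (s i k) x) x := fun i k x =>
    (((hs i k).differentiable (by simp)) x).hasDerivAt
  have hdf : ∀ (k : Fin 2) (x y : ℝ), HasFDerivAt (fun p : ℝ × ℝ => f k p.1 p.2)
      (fderiv ℝ (fun p : ℝ × ℝ => f k p.1 p.2) (x, y)) (x, y) := fun k x y =>
    ((((hf k).differentiable (by simp)) (x, y)).hasFDerivAt)
  have hH0 : H 0 = fun w : Fin 4 → ℝ =>
      (s 1 1 (w 1) * f 0 (w 0) (w 2) + -s 0 1 (w 0) * f 1 (w 1) (w 3)) /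
      (s 0 0 (w 0) * s 1 1 (w 1) - s 0 1 (w 0) * s 1 0 (w 1)) := by
    funext w
    rw [hH, hSm]
    simp [Fin.sum_univ_two, Matrix.adjugate_fin_two, Matrix.det_fin_two,
      fin4_mk0, fin4_mk1, fin4_mk2, fin4_mk3]
    ring
  have hH1 : H 1 = fun w : Fin 4 → ℝ =>
      (-s 1 0 (w 1) * f 0 (w 0) (w 2) + s 0 0 (w 0) * f 1 (w 1) (w 3)) /
      (s 0 0 (w 0) * s 1 1 (w 1) - s 0 1 (w 0) * s 1 0 (w 1)) := by
    funext w
    rw [hH, hSm]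
    simp [Fin.sum_univ_two, Matrix.adjugate_fin_two, Matrix.det_fin_two,
      fin4_mk0, fin4_mk1, fin4_mk2, fin4_mk3]
    ring
  obtain ⟨e00, e01, e02, e03⟩ := pd_phi (s 1 1) (fun t => -s 0 1 t) (s 0 0) (s 0 1) (s 1 0) (s 1 1)
    (f 0) (f 1) v _ _ _ _ _ _ _ _
    (hds 1 1 (v 1)) ((hds 0 1 (v 0)).neg) (hds 0 0 (v 0)) (hds 0 1 (v 0)) (hds 1 0 (v 1))
    (hds 1 1 (v 1)) (hdf 0 (v 0) (v 2)) (hdf 1 (v 1) (v 3)) hdet'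
  obtain ⟨e10, e11, e12, e13⟩ := pd_phi (fun t => -s 1 0 t) (s 0 0) (s 0 0) (s 0 1) (s 1 0) (s 1 1)
    (f 0) (f 1) v _ _ _ _ _ _ _ _
    ((hds 1 0 (v 1)).neg) (hds 0 0 (v 0)) (hds 0 0 (v 0)) (hds 0 1 (v 0)) (hds 1 0 (v 1))
    (hds 1 1 (v 1)) (hdf 0 (v 0) (v 2)) (hdf 1 (v 1) (v 3)) hdet'
  fin_cases j
  · simp only [Fin.zero_eta, Fin.isValue]
    exact ⟨by rw [div_self (hcof v r), one_mul], by rw [div_self (hcof v r), one_mul]⟩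
  · simp only [Fin.mk_one, Fin.isValue]
    rw [hSm, hH0, hH1]
    fin_cases r
    · simp only [Fin.val_zero, Fin.val_one, Nat.reduceAdd, fin4_mk0, fin4_mk2, Fin.zero_eta, Fin.mk_one,
        Matrix.adjugate_fin_two, Matrix.of_apply, Matrix.cons_val', Matrix.cons_val_zero,
        Matrix.cons_val_one, Matrix.head_cons, Matrix.empty_val', Matrix.cons_val_fin_one,
        Matrix.head_fin_const, fin4_mk1]
      rw [e00, e10, e02, e12]
      constructor
      · field_simp
        ring
      · field_simp
    · simp only [Fin.val_one, Fin.val_zero, Nat.reduceAdd, fin4_mk1, fin4_mk3, Fin.zero_eta, Fin.mk_one,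
        Matrix.adjugate_fin_two, Matrix.of_apply, Matrix.cons_val', Matrix.cons_val_zero,
        Matrix.cons_val_one, Matrix.head_cons, Matrix.empty_val', Matrix.cons_val_fin_one,
        Matrix.head_fin_const, fin4_mk0]
      rw [e01, e11, e03, e13]
      constructor
      · field_simp
        ring
      · field_simp
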